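/- Let G be a finitely generated free group with basis g₁,…,g_k and α : G → G an endomorphism such that rank(im α) = rank(im α²). Then the sequence F_n = im(αⁿ) stabilizes if and only if αⁿ(gᵢ) ∈ im(α^{n+1}) for every i, where n is any index with rank(F_n) = rank(F_{n+1}). -/

import Mathlib

/-- The rank of a free group: the cardinality of a basis. -/
noncomputable def freeRank (H : Type*) [Group H] [IsFreeGroup H] : ℕ :=
  Nat.card (IsFreeGroup.Generators H)

/-- The `n`-th iterate `α ^ n` of an endomorphism. -/
def iterHom {G : Type*} [Group G] (α : G →* G) : ℕ → (G →* G)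
  | 0 => MonoidHom.id G
  | (n + 1) => α.comp (iterHom α n)

open Function

lemma exists_perm_extend {β : Type*} [Fintype β] (f : β → β) (D : Set β)
    (hinj : D.InjOn f) : ∃ σ : Equiv.Perm β, ∀ x ∈ D, σ x = f x := by
  classical
  let e₁ : D ≃ (f '' D : Set β) := Equiv.Set.imageOfInjOn f D hinj
  have hcard : Fintype.card (↥(D)ᶜ : Type _) = Fintype.card (↥(f '' D)ᶜ : Type _) := by
    rw [Fintype.card_compl_set, Fintype.card_compl_set, Fintype.card_congr e₁]
  obtain ⟨e₂⟩ := Fintype.card_eq.mp hcard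
  refine ⟨(Equiv.Set.sumCompl D).symm.trans ((e₁.sumCongr e₂).trans
    (Equiv.Set.sumCompl (f '' D))), fun x hx => ?_⟩
  simp [e₁, Equiv.Set.sumCompl_symm_apply_of_mem hx, Equiv.Set.imageOfInjOn]

theorem freeGroup_residually_finite {ι : Type*} (g : FreeGroup ι) (hg : g ≠ 1) :
    ∃ (N : ℕ) (π : FreeGroup ι →* Equiv.Perm (Fin N)), π g ≠ 1 := by
  classical
  set L : List (ι × Bool) := g.toWord with hLdef
  set l : ℕ := L.length with hldef
  have hl : 0 < l := by
    rcases Nat.eq_zero_or_pos l with h | h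
    · exact absurd (FreeGroup.toWord_eq_nil_iff.mp (List.length_eq_zero_iff.mp h)) hg
    · exact h
  -- reducedness
  have hred : ∀ (q : ℕ) (x : ι) (b c : Bool),
      L[q]? = some (x, b) → L[q + 1]? = some (x, c) → c = b := by
    intro q x b c h1 h2
    by_contra hcb
    have hc : c = !b := by cases b <;> cases c <;> simp_all
    obtain ⟨hq1, e1⟩ := List.getElem?_eq_some_iff.mp h1
    obtain ⟨hq2, e2⟩ := List.getElem?_eq_some_iff.mp h2
    have hdecomp : L = L.take q ++ (x, b) :: (x, !b) :: L.drop (q + 2) := by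
      conv_lhs => rw [← List.take_append_drop q L]
      rw [List.drop_eq_getElem_cons hq1, List.drop_eq_getElem_cons hq2, e1, e2, hc]
    have : FreeGroup.reduce L = L.take q ++ (x, b) :: (x, !b) :: L.drop (q + 2) := by
      rw [hLdef, FreeGroup.reduce_toWord, ← hLdef]; exact hdecomp
    exact FreeGroup.reduce.not this
  set N : ℕ := l + 1 with hN
  -- the partial maps
  set D : ι → Set (Fin N) := fun i => {q | L[(q : ℕ)]? = some (i, false) ∨
      (0 < (q : ℕ) ∧ L[(q : ℕ) - 1]? = some (i, true))} with hD
  set f : ι → Fin N → Fin N := fun i q =>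
    if h : L[(q : ℕ)]? = some (i, false) then
      ⟨(q : ℕ) + 1, by
        have := (List.getElem?_eq_some_iff.mp h).1; omega⟩
    else ⟨(q : ℕ) - 1, by omega⟩ with hf
  have hf1 : ∀ (i : ι) (q : Fin N), L[(q : ℕ)]? = some (i, false) → (f i q : ℕ) = (q : ℕ) + 1 := by
    intro i q h; simp [hf, h]
  have hf2 : ∀ (i : ι) (q : Fin N), 0 < (q : ℕ) → L[(q : ℕ) - 1]? = some (i, true) →
      (f i q : ℕ) = (q : ℕ) - 1 := by
    intro i q hq h
    have hnot : ¬ L[(q : ℕ)]? = some (i, false) := by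
      intro h'
      have := hred ((q : ℕ) - 1) i true false h (by rwa [Nat.sub_add_cancel hq])
      simp at this
    simp [hf, hnot]
  have hinj : ∀ i : ι, (D i).InjOn (f i) := by
    intro i q hq q' hq' heq
    have hv : (f i q : ℕ) = (f i q' : ℕ) := by rw [heq]
    rcases hq with h1 | ⟨h2, h2'⟩ <;> rcases hq' with h1' | ⟨h3, h3'⟩
    · apply Fin.ext
      rw [hf1 i q h1, hf1 i q' h1'] at hv; omega
    · rw [hf1 i q h1, hf2 i q' h3 h3'] at hv
      exfalso
      have : (q' : ℕ) - 1 = (q : ℕ) + 1 := by omega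
      have := hred (q : ℕ) i false true h1 (this ▸ h3')
      simp at this
    · rw [hf2 i q h2 h2', hf1 i q' h1'] at hv
      exfalso
      have : (q : ℕ) - 1 = (q' : ℕ) + 1 := by omega
      have := hred (q' : ℕ) i false true h1' (this ▸ h2')
      simp at this
    · apply Fin.ext
      rw [hf2 i q h2 h2', hf2 i q' h3 h3'] at hv; omega
  choose σ hσ using fun i => exists_perm_extend (f i) (D i) (hinj i)
  set π : FreeGroup ι →* Equiv.Perm (Fin N) := FreeGroup.lift σ with hπ
  -- letter action
  have hletter : ∀ (p : ℕ) (i : ι) (b : Bool), L[p]? = some (i, b) →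
      ∀ (hp1 : p + 1 < N) (hp : p < N),
      (cond b (σ i) (σ i)⁻¹) ⟨p + 1, hp1⟩ = ⟨p, hp⟩ := by
    intro p i b hL hp1 hp
    cases b
    · -- b = false : σ i ⟨p⟩ = ⟨p+1⟩
      have hmem : (⟨p, hp⟩ : Fin N) ∈ D i := Or.inl hL
      have hval : (f i ⟨p, hp⟩ : ℕ) = p + 1 := hf1 i ⟨p, hp⟩ hL
      have hss : σ i ⟨p, hp⟩ = ⟨p + 1, hp1⟩ := (hσ i ⟨p, hp⟩ hmem).trans (Fin.ext hval)
      simp only [cond_false]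
      rw [← hss]; exact Equiv.symm_apply_apply _ _
    · -- b = true : σ i ⟨p+1⟩ = ⟨p⟩
      have hmem : (⟨p + 1, hp1⟩ : Fin N) ∈ D i := Or.inr ⟨Nat.succ_pos p, by simpa using hL⟩
      have h1 := hσ i ⟨p + 1, hp1⟩ hmem
      have hval : (f i ⟨p + 1, hp1⟩ : ℕ) = p := by
        have := hf2 i ⟨p + 1, hp1⟩ (Nat.succ_pos p) (by simpa using hL)
        simpa using this
      simp only [cond_true, h1]
      exact Fin.ext hval
  have main : ∀ t, t ≤ l → ∀ (h1 : l < N) (h2 : l - t < N),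
      π (FreeGroup.mk (L.drop (l - t))) ⟨l, h1⟩ = ⟨l - t, h2⟩ := by
    intro t
    induction t with
    | zero =>
      intro _ h1 h2
      simp only [Nat.sub_zero]
      have hdl : L.drop l = [] := by rw [hldef]; exact List.drop_length (l := L)
      rw [hdl, ← FreeGroup.one_eq_mk, map_one, Equiv.Perm.one_apply]
    | succ t ih =>
      intro ht h1 h2
      have hplen : l - (t + 1) < L.length := by rw [← hldef]; omega
      have e1 : L.drop (l - (t + 1)) = L[l - (t + 1)]'hplen :: L.drop (l - (t + 1) + 1) :=
        List.drop_eq_getElem_cons hplen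
      have hLp : L[l - (t + 1)]? =
          some ((L[l - (t + 1)]'hplen).1, (L[l - (t + 1)]'hplen).2) := by
        simp [List.getElem?_eq_getElem hplen]
      have hsucc : l - (t + 1) + 1 = l - t := by omega
      have hlt : l - t < N := by omega
      have ihh := ih (by omega) h1 hlt
      rw [hπ] at ihh
      rw [e1, hπ, FreeGroup.lift_mk, List.map_cons, List.prod_cons, Equiv.Perm.mul_apply,
        ← FreeGroup.lift_mk, hsucc, ihh]
      have hpt : (⟨l - t, hlt⟩ : Fin N) = ⟨l - (t + 1) + 1, by omega⟩ := Fin.ext (show l - t = l - (t + 1) + 1 by omega)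
      rw [hpt]
      exact hletter _ _ _ hLp (by omega) h2
  refine ⟨N, π, ?_⟩
  intro hone
  have h1 : l < N := by omega
  have hmain := main l le_rfl h1 (by omega)
  have hg' : FreeGroup.mk (List.drop (l - l) L) = g := by
    rw [Nat.sub_self, List.drop_zero, hLdef, FreeGroup.mk_toWord]
  rw [hg', hone, Equiv.Perm.one_apply] at hmain
  have hll : l = l - l := congrArg Fin.val hmain
  omega

theorem freeGroup_hopfian {ι : Type*} [Finite ι] (φ : FreeGroup ι →* FreeGroup ι)
    (hφ : Function.Surjective φ) : Function.Injective φ := by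
  rw [injective_iff_map_eq_one]
  intro a ha
  by_contra hne
  obtain ⟨N, π, hπ⟩ := freeGroup_residually_finite a hne
  haveI : Finite (FreeGroup ι →* Equiv.Perm (Fin N)) := by
    apply Finite.of_injective (fun ψ : FreeGroup ι →* Equiv.Perm (Fin N) =>
      (fun i => ψ (FreeGroup.of i) : ι → Equiv.Perm (Fin N)))
    intro ψ₁ ψ₂ h
    exact FreeGroup.ext_hom _ _ fun i => congrFun h i
  have hT : Function.Injective (fun ψ : FreeGroup ι →* Equiv.Perm (Fin N) => ψ.comp φ) := by
    intro ψ₁ ψ₂ h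
    apply MonoidHom.ext
    intro x
    obtain ⟨y, rfl⟩ := hφ x
    exact DFunLike.congr_fun h y
  obtain ⟨ψ, hψ⟩ := (Finite.injective_iff_surjective.mp hT) π
  have : π a = 1 := by rw [← hψ]; show ψ (φ a) = 1; rw [ha, map_one]
  exact hπ this

lemma finite_of_freeGroup_fg {ι : Type*} (h : Group.FG (FreeGroup ι)) : Finite ι := by
  classical
  obtain ⟨S, hS, hSfin⟩ := Group.fg_iff.mp h
  set T : Set ι := ⋃ s ∈ S, {x | x ∈ (FreeGroup.toWord s).map Prod.fst} with hT
  have hTfin : T.Finite := hSfin.biUnion fun s _ => (FreeGroup.toWord s).map Prod.fst |>.finite_toSet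
  have hall : ∀ x : ι, x ∈ T := by
    intro x
    by_contra hx
    set χ : FreeGroup ι →* Multiplicative ℤ :=
      FreeGroup.lift (fun y => Multiplicative.ofAdd (if y = x then (1 : ℤ) else 0)) with hχ
    have hker : ∀ s ∈ S, χ s = 1 := by
      intro s hs
      rw [← FreeGroup.mk_toWord (x := s), hχ, FreeGroup.lift_mk]
      apply List.prod_eq_one
      intro z hz
      simp only [List.mem_map] at hz
      obtain ⟨⟨y, b⟩, hyb, rfl⟩ := hz
      have hy : y ∈ T := Set.mem_biUnion hs
        (by simpa using List.mem_map_of_mem (f := Prod.fst) hyb)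
      have hyx : y ≠ x := fun e => hx (e ▸ hy)
      cases b <;> simp [hyx]
    have htop : Subgroup.closure S ≤ χ.ker := by
      rw [Subgroup.closure_le]
      intro s hs
      exact MonoidHom.mem_ker.mpr (hker s hs)
    rw [hS] at htop
    have hx1 : χ (FreeGroup.of x) = 1 := htop (Subgroup.mem_top _)
    rw [hχ, FreeGroup.lift_apply_of] at hx1
    simp at hx1
  exact Set.finite_univ_iff.mp (hTfin.subset fun x _ => hall x)

lemma finite_generators_of_fg (H : Type*) [Group H] [IsFreeGroup H] [Group.FG H] :
    Finite (IsFreeGroup.Generators H) :=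
  finite_of_freeGroup_fg
    (Group.fg_of_surjective (f := (IsFreeGroup.toFreeGroup (G := H)).toMonoidHom)
      (IsFreeGroup.toFreeGroup (G := H)).surjective)

lemma isFreeGroup_hopfian {H : Type*} [Group H] [IsFreeGroup H] [Group.FG H]
    (ψ : H →* H) (hs : Function.Surjective ψ) : Function.Injective ψ := by
  haveI : Finite (IsFreeGroup.Generators H) := finite_generators_of_fg H
  set e := IsFreeGroup.toFreeGroup (G := H) with he
  set φ : FreeGroup (IsFreeGroup.Generators H) →* FreeGroup (IsFreeGroup.Generators H) :=
    (e.toMonoidHom.comp ψ).comp e.symm.toMonoidHom with hφ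
  have hφs : Function.Surjective φ :=
    e.surjective.comp (hs.comp e.symm.surjective)
  have hφi := freeGroup_hopfian φ hφs
  intro a b hab
  have h2 : φ (e a) = φ (e b) := by
    show e.toMonoidHom (ψ (e.symm (e a))) = e.toMonoidHom (ψ (e.symm (e b)))
    rw [e.symm_apply_apply, e.symm_apply_apply, hab]
  exact e.injective (hφi h2)

lemma mulEquiv_of_freeRank_eq {H K : Type*} [Group H] [Group K] [IsFreeGroup H] [IsFreeGroup K]
    [Group.FG H] [Group.FG K] (h : freeRank H = freeRank K) : Nonempty (H ≃* K) := by
  haveI := finite_generators_of_fg H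
  haveI := finite_generators_of_fg K
  cases nonempty_fintype (IsFreeGroup.Generators H)
  cases nonempty_fintype (IsFreeGroup.Generators K)
  rw [freeRank, freeRank, Nat.card_eq_fintype_card, Nat.card_eq_fintype_card] at h
  obtain ⟨e⟩ := Fintype.card_eq.mp h
  exact ⟨(IsFreeGroup.toFreeGroup (G := H)).trans ((FreeGroup.freeGroupCongr e).trans
    (IsFreeGroup.toFreeGroup (G := K)).symm)⟩

lemma injective_of_surjective_of_freeRank_eq {H K : Type*} [Group H] [Group K]
    [IsFreeGroup H] [IsFreeGroup K] [Group.FG H]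
    (β : H →* K) (hs : Function.Surjective β) (hr : freeRank H = freeRank K) :
    Function.Injective β := by
  haveI : Group.FG K := Group.fg_of_surjective hs
  obtain ⟨e⟩ := mulEquiv_of_freeRank_eq (H := K) (K := H) hr.symm
  have h := isFreeGroup_hopfian (e.toMonoidHom.comp β) (e.surjective.comp hs)
  intro a b hab
  exact h (by simp [MonoidHom.comp_apply, hab])

section IterLemmas
variable {G : Type*} [Group G] (α : G →* G)

lemma iterHom_succ_apply_aux (n : ℕ) (x : G) : iterHom α (n + 1) x = iterHom α n (α x) := by
  induction n with
  | zero => rfl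
  | succ n ih =>
    show α (iterHom α (n + 1) x) = α (iterHom α n (α x))
    rw [ih]

lemma range_succ_le (n : ℕ) : (iterHom α (n + 1)).range ≤ (iterHom α n).range := by
  rintro x ⟨y, rfl⟩
  exact ⟨α y, (iterHom_succ_apply_aux α n y).symm⟩

lemma range_antitone {n j : ℕ} (h : n ≤ j) : (iterHom α j).range ≤ (iterHom α n).range := by
  induction j, h using Nat.le_induction with
  | base => exact le_rfl
  | succ j hj ih => exact (range_succ_le α j).trans ih

lemma range_succ_eq_map (n : ℕ) :
    (iterHom α (n + 1)).range = Subgroup.map α (iterHom α n).range :=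
  MonoidHom.range_comp α (iterHom α n)

end IterLemmas

instance freeGroup_fg (k : ℕ) : Group.FG (FreeGroup (Fin k)) :=
  Group.fg_iff.mpr ⟨Set.range FreeGroup.of, FreeGroup.closure_range_of _,
    Set.finite_range _⟩

theorem stabilizes_iff_generators_in_next_image (k : ℕ)
    (α : FreeGroup (Fin k) →* FreeGroup (Fin k))
    (hα : freeRank (iterHom α 1).range = freeRank (iterHom α 2).range) :
    ∀ n : ℕ, freeRank (iterHom α n).range = freeRank (iterHom α (n + 1)).range →
      ((∃ m : ℕ, (iterHom α m).range = (iterHom α (m + 1)).range) ↔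
        ∀ i : Fin k, iterHom α n (FreeGroup.of i) ∈ (iterHom α (n + 1)).range) := by
  intro n hrank
  constructor
  · rintro ⟨m, hm⟩
    suffices hF : (iterHom α n).range = (iterHom α (n + 1)).range by
      intro i; rw [← hF]; exact ⟨FreeGroup.of i, rfl⟩
    have hmem : ∀ x : FreeGroup (Fin k), x ∈ (iterHom α n).range →
        α x ∈ (iterHom α (n + 1)).range := by
      rintro _ ⟨y, rfl⟩
      exact ⟨y, rfl⟩
    set β : ↥(iterHom α n).range →* ↥(iterHom α (n + 1)).range :=
      (α.comp (iterHom α n).range.subtype).codRestrict _ (fun x => hmem x x.2) with hβ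
    have hβs : Function.Surjective β := by
      rintro ⟨z, w, rfl⟩
      exact ⟨⟨iterHom α n w, ⟨w, rfl⟩⟩, Subtype.ext rfl⟩
    have hβi := injective_of_surjective_of_freeRank_eq β hβs hrank
    have hinj : ∀ x y : FreeGroup (Fin k), x ∈ (iterHom α n).range →
        y ∈ (iterHom α n).range → α x = α y → x = y := by
      intro x y hx hy he
      exact congrArg Subtype.val (hβi (a₁ := ⟨x, hx⟩) (a₂ := ⟨y, hy⟩) (Subtype.ext he))
    have up : ∀ j, m ≤ j → (iterHom α j).range = (iterHom α m).range := by
      intro j hj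
      induction j, hj using Nat.le_induction with
      | base => rfl
      | succ j hj ih =>
        rw [range_succ_eq_map, ih, ← range_succ_eq_map, ← hm]
    have down : ∀ j, n ≤ j →
        (iterHom α (j + 1)).range = (iterHom α (j + 2)).range →
        (iterHom α j).range = (iterHom α (j + 1)).range := by
      intro j hj hstep
      refine le_antisymm ?_ (range_succ_le α j)
      rintro x ⟨y, rfl⟩
      have h1 : α (iterHom α j y) ∈ (iterHom α (j + 2)).range := by
        rw [← hstep]; exact ⟨y, rfl⟩
      rw [range_succ_eq_map α (j + 1)] at h1
      obtain ⟨z, hz, hze⟩ := h1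
      have hx : iterHom α j y ∈ (iterHom α n).range := range_antitone α hj ⟨y, rfl⟩
      have hzn : z ∈ (iterHom α n).range := range_antitone α (by omega) hz
      exact (hinj z (iterHom α j y) hzn hx hze) ▸ hz
    rcases le_or_gt n m with hnm | hmn
    · have desc : ∀ t, t ≤ m - n →
          (iterHom α (m - t)).range = (iterHom α (m - t + 1)).range := by
        intro t
        induction t with
        | zero => intro _; simpa using hm
        | succ t ih =>
          intro ht
          have ha1 : m - (t + 1) + 1 = m - t := by omega
          have ha2 : m - (t + 1) + 1 + 1 = m - t + 1 := by omega
          apply down (m - (t + 1)) (by omega)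
          rw [ha1, ha2]
          exact ih (by omega)
      have key := desc (m - n) le_rfl
      have hmn' : m - (m - n) = n := by omega
      rw [hmn'] at key
      exact key
    · have h1 := up n (by omega)
      have h2 := up (n + 1) (by omega)
      rw [h1, h2]
  · intro h
    refine ⟨n, le_antisymm ?_ (range_succ_le α n)⟩
    rintro x ⟨y, rfl⟩
    have htop : (⊤ : Subgroup (FreeGroup (Fin k))) ≤
        Subgroup.comap (iterHom α n) (iterHom α (n + 1)).range := by
      rw [← FreeGroup.closure_range_of (Fin k), Subgroup.closure_le]
      rintro _ ⟨i, rfl⟩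
      exact h i
    exact htop (Subgroup.mem_top y)
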